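/- Let A be a nonempty convex set in ℝ^d and let 1 ≤ n < d. Then T_n({A}), the space of all affine n-planes in ℝ^d that intersect A, is homotopy equivalent to G(n,d), the Grassmannian of all n-dimensional linear subspaces of ℝ^d. -/

import Mathlib

/-- The Grassmannian `G(n, d)` of `n`-dimensional linear subspaces of `ℝ^d`. -/
def Grassmannian (n d : ℕ) : Type :=
  {W : Submodule ℝ (EuclideanSpace ℝ (Fin d)) // Module.finrank ℝ W = n}

/-- The (continuous linear) orthogonal projection of `ℝ^d` onto a subspace. -/
noncomputable def projOnto {d : ℕ} (W : Submodule ℝ (EuclideanSpace ℝ (Fin d))) :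
    EuclideanSpace ℝ (Fin d) →L[ℝ] EuclideanSpace ℝ (Fin d) :=
  W.subtypeL.comp (W.orthogonalProjection)

/-- The Grassmannian is topologized via orthogonal projections. -/
noncomputable instance (n d : ℕ) : TopologicalSpace (Grassmannian n d) :=
  TopologicalSpace.induced (fun W => projOnto W.1) inferInstance

/-- The type of (nonempty) affine `n`-flats in `ℝ^d`. -/
def AffineFlat (n d : ℕ) : Type :=
  {P : AffineSubspace ℝ (EuclideanSpace ℝ (Fin d)) //
    (P : Set (EuclideanSpace ℝ (Fin d))).Nonempty ∧ Module.finrank ℝ P.direction = n}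

/-- The standard affine embedding `ℝ^d ↪ ℝ^{d+1}`, `x ↦ (x, 1)`. -/
noncomputable def affEmb (d : ℕ) : EuclideanSpace ℝ (Fin d) → EuclideanSpace ℝ (Fin (d + 1)) :=
  fun x => (EuclideanSpace.equiv (Fin (d + 1)) ℝ).symm (Fin.snoc (EuclideanSpace.equiv (Fin d) ℝ x) 1)

/-- The space of affine `n`-flats in `ℝ^d` is topologized as a subspace of the
Grassmannian `G(n+1, d+1)`, by sending an affine flat `P` to the linear span of
`{(x, 1) | x ∈ P}` in `ℝ^{d+1}` (equivalently, via the orthogonal projection onto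
this span). -/
noncomputable instance (n d : ℕ) : TopologicalSpace (AffineFlat n d) :=
  TopologicalSpace.induced
    (fun P => projOnto (Submodule.span ℝ (affEmb d '' (P.1 : Set (EuclideanSpace ℝ (Fin d))))))
    inferInstance

/-- `Transversals n A s` is the space of affine `n`-flats in `ℝ^d` meeting every
member `A i`, `i ∈ s`, of the family `A`. -/
def Transversals {d : ℕ} (n : ℕ) {ι : Type} (A : ι → Set (EuclideanSpace ℝ (Fin d)))
    (s : Set ι) : Set (AffineFlat n d) :=
  {P | ∀ i ∈ s, ((P.1 : Set (EuclideanSpace ℝ (Fin d))) ∩ A i).Nonempty}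

/-- A family of convex sets in `ℝ^d` is *separated* if for every `2 ≤ k ≤ d`, no
subfamily of size `k` admits an affine `(k-2)`-flat transversal. -/
def SeparatedFamily {d : ℕ} {ι : Type} (A : ι → Set (EuclideanSpace ℝ (Fin d))) : Prop :=
  ∀ k : ℕ, 2 ≤ k → k ≤ d → ∀ s : Finset ι, s.card = k →
    ¬ ∃ P : AffineFlat (k - 2) d, ∀ i ∈ s, ((P.1 : Set (EuclideanSpace ℝ (Fin d))) ∩ A i).Nonempty



open scoped RealInnerProductSpace

noncomputable section

abbrev Eu (d : ℕ) : Type := EuclideanSpace ℝ (Fin d)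


variable {d : ℕ}

lemma projOnto_eq_of {K : Submodule ℝ (Eu d)} {u v : Eu d} (hvm : v ∈ K)
    (hvo : ∀ w ∈ K, ⟪u - v, w⟫ = 0) : projOnto K u = v :=
  K.eq_starProjection_of_mem_of_inner_eq_zero hvm hvo

lemma projOnto_mem (K : Submodule ℝ (Eu d)) (u : Eu d) : projOnto K u ∈ K :=
  (K.orthogonalProjection u).2

lemma projOnto_inner_zero (K : Submodule ℝ (Eu d)) (u : Eu d) :
    ∀ w ∈ K, ⟪u - projOnto K u, w⟫ = 0 := fun w hw =>
  K.starProjection_inner_eq_zero u w hw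

/-- The linear isometry `x ↦ (x, 0)`. -/
def iso (d : ℕ) : Eu d →ₗᵢ[ℝ] Eu (d + 1) := by
  refine LinearMap.isometryOfInner
    { toFun := fun x => WithLp.toLp 2 (Fin.snoc x 0 : Fin (d+1) → ℝ)
      map_add' := ?_, map_smul' := ?_ } ?_
  · intro x y; ext i
    induction i using Fin.lastCases <;> simp [Fin.snoc_castSucc, Fin.snoc_last] <;> rfl
  · intro c x; ext i
    induction i using Fin.lastCases <;> simp [Fin.snoc_castSucc, Fin.snoc_last] <;> rfl
  · intro x y
    simp only [PiLp.inner_apply, RCLike.inner_apply, conj_trivial]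
    rw [Fin.sum_univ_castSucc]
    simp [Fin.snoc_castSucc, Fin.snoc_last]

@[simp] lemma iso_castSucc (x : Eu d) (i : Fin d) : iso d x i.castSucc = x i := by
  simp [iso, LinearMap.isometryOfInner, Fin.snoc_castSucc]

@[simp] lemma iso_last (x : Eu d) : iso d x (Fin.last d) = 0 := by
  simp [iso, LinearMap.isometryOfInner, Fin.snoc_last]

/-- truncation `(x, t) ↦ x` as a linear map. -/
def trunc (d : ℕ) : Eu (d + 1) →ₗ[ℝ] Eu d where
  toFun y := WithLp.toLp 2 (fun i : Fin d => y i.castSucc)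
  map_add' x y := rfl
  map_smul' c x := rfl

@[simp] lemma trunc_apply (y : Eu (d+1)) (i : Fin d) : trunc d y i = y i.castSucc := rfl

@[simp] lemma trunc_iso (x : Eu d) : trunc d (iso d x) = x := by
  ext i; simp

lemma inner_iso_left (x : Eu d) (y : Eu (d+1)) : ⟪iso d x, y⟫ = ⟪x, trunc d y⟫ := by
  simp only [PiLp.inner_apply, RCLike.inner_apply, conj_trivial]
  rw [Fin.sum_univ_castSucc]
  simp

lemma inner_iso_right (x : Eu (d+1)) (y : Eu d) : ⟪x, iso d y⟫ = ⟪trunc d x, y⟫ := by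
  rw [real_inner_comm, inner_iso_left, real_inner_comm]

def eL (d : ℕ) : Eu (d + 1) := EuclideanSpace.single (Fin.last d) 1

lemma affEmb_eq (x : Eu d) : affEmb d x = iso d x + eL d := by
  ext i
  induction i using Fin.lastCases with
  | last => simp [affEmb, eL, Fin.snoc_last, EuclideanSpace.single_apply]
  | cast i => simp [affEmb, eL, Fin.snoc_castSucc, EuclideanSpace.single_apply,
      (Fin.castSucc_lt_last i).ne]

@[simp] lemma eL_last : eL d (Fin.last d) = 1 := by simp [eL, EuclideanSpace.single_apply]

@[simp] lemma eL_castSucc (i : Fin d) : eL d i.castSucc = 0 := by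
  simp [eL, EuclideanSpace.single_apply, (Fin.castSucc_lt_last i).ne]

lemma inner_eL_right (x : Eu (d+1)) : ⟪x, eL d⟫ = x (Fin.last d) := by
  simp only [PiLp.inner_apply, RCLike.inner_apply, conj_trivial]
  rw [Fin.sum_univ_castSucc]
  simp

lemma inner_iso_eL (x : Eu d) : ⟪iso d x, eL d⟫ = 0 := by
  rw [inner_eL_right]; simp

lemma inner_affEmb (x y : Eu d) : ⟪affEmb d x, affEmb d y⟫ = ⟪x, y⟫ + 1 := by
  have h1 : ⟪eL d, iso d y⟫ = 0 := by rw [real_inner_comm]; exact inner_iso_eL y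
  have h2 : ⟪eL d, eL d⟫ = (1:ℝ) := by rw [inner_eL_right]; simp
  rw [affEmb_eq, affEmb_eq, inner_add_left, inner_add_right, inner_add_right,
    inner_iso_eL, (iso d).inner_map_map, h1, h2]
  ring

lemma affEmb_last (x : Eu d) : affEmb d x (Fin.last d) = 1 := by
  rw [affEmb_eq]; show iso d x (Fin.last d) + eL d (Fin.last d) = 1; simp

lemma affEmb_castSucc (x : Eu d) (i : Fin d) : affEmb d x i.castSucc = x i := by
  rw [affEmb_eq]; show iso d x i.castSucc + eL d i.castSucc = x i; simp

lemma trunc_affEmb (x : Eu d) : trunc d (affEmb d x) = x := by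
  ext i; simp [affEmb_castSucc]

lemma affEmb_ne_zero (x : Eu d) : affEmb d x ≠ 0 := fun h => by
  have := affEmb_last x; rw [h] at this; simpa using this

lemma norm_affEmb_sq (x : Eu d) : (‖affEmb d x‖ : ℝ) ^ 2 = ‖x‖ ^ 2 + 1 := by
  rw [← real_inner_self_eq_norm_sq, ← real_inner_self_eq_norm_sq, inner_affEmb]

/-- rank-one "projection onto the line through `affEmb c`" as explicit operator. -/
def outerAff (d : ℕ) (c : Eu d) : Eu (d+1) →L[ℝ] Eu (d+1) :=
  (‖c‖ ^ 2 + 1)⁻¹ • (innerSL ℝ (affEmb d c)).smulRight (affEmb d c)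

lemma outerAff_apply (c : Eu d) (x : Eu (d+1)) :
    outerAff d c x = (‖c‖ ^ 2 + 1)⁻¹ • (⟪affEmb d c, x⟫ • affEmb d c) := rfl

lemma projOnto_span_affEmb (c : Eu d) :
    projOnto (ℝ ∙ affEmb d c) = outerAff d c := by
  refine ContinuousLinearMap.ext fun x => ?_
  show ((ℝ ∙ affEmb d c).starProjection x : Eu (d+1)) = _
  rw [Submodule.starProjection_singleton, outerAff_apply, norm_affEmb_sq, smul_smul,
    div_eq_inv_mul]
  norm_cast

lemma projOnto_sup {U V : Submodule ℝ (Eu d)}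
    (h : ∀ u ∈ U, ∀ v ∈ V, ⟪u, v⟫ = 0) :
    projOnto (U ⊔ V) = projOnto U + projOnto V := by
  refine ContinuousLinearMap.ext fun x => ?_
  rw [ContinuousLinearMap.add_apply]
  refine projOnto_eq_of (Submodule.mem_sup.2
    ⟨projOnto U x, projOnto_mem U x, projOnto V x, projOnto_mem V x, rfl⟩) ?_
  intro w hw
  rcases Submodule.mem_sup.1 hw with ⟨u, hu, v, hv, rfl⟩
  have h1 : ⟪x - projOnto U x, u⟫ = 0 := projOnto_inner_zero U x u hu
  have h2 : ⟪x - projOnto V x, v⟫ = 0 := projOnto_inner_zero V x v hv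
  have h3 : ⟪projOnto V x, u⟫ = 0 := by
    rw [real_inner_comm]; exact h u hu _ (projOnto_mem V x)
  have h4 : ⟪projOnto U x, v⟫ = 0 := h _ (projOnto_mem U x) v hv
  have e1 : ⟪x - (projOnto U x + projOnto V x), u + v⟫
      = ⟪x - projOnto U x, u⟫ - ⟪projOnto V x, u⟫
        + (⟪x - projOnto V x, v⟫ - ⟪projOnto U x, v⟫) := by
    simp only [inner_sub_left, inner_add_left, inner_add_right]
    ring
  rw [e1, h1, h2, h3, h4]; ring

lemma projOnto_map_iso (W : Submodule ℝ (Eu d)) (y : Eu (d+1)) :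
    projOnto (W.map (iso d).toLinearMap) y = iso d (projOnto W (trunc d y)) := by
  refine projOnto_eq_of (Submodule.mem_map_of_mem (projOnto_mem W _)) ?_
  intro w hw
  rcases hw with ⟨v, hv, rfl⟩
  show ⟪y - iso d (projOnto W (trunc d y)), iso d v⟫ = 0
  rw [inner_sub_left, inner_iso_right, (iso d).inner_map_map,
    ← inner_sub_left]
  exact projOnto_inner_zero W (trunc d y) v hv
section Key
variable {P : AffineSubspace ℝ (Eu d)} {c : Eu d}

/-- Orthogonality of the direction (lifted) and the line through `affEmb c`. -/
lemma ortho_dir_line (hortho : ∀ v ∈ P.direction, ⟪c, v⟫ = 0) :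
    ∀ u ∈ P.direction.map (iso d).toLinearMap, ∀ w ∈ (ℝ ∙ affEmb d c), ⟪u, w⟫ = 0 := by
  rintro u ⟨v, hv, rfl⟩ w hw
  rcases Submodule.mem_span_singleton.1 hw with ⟨s, rfl⟩
  show ⟪iso d v, s • affEmb d c⟫ = 0
  rw [inner_smul_right, affEmb_eq, inner_add_right, inner_iso_eL,
    (iso d).inner_map_map, real_inner_comm]
  rw [hortho v hv]
  ring

lemma span_affEmb_eq (hc : c ∈ P) (_hortho : ∀ v ∈ P.direction, ⟪c, v⟫ = 0) :
    Submodule.span ℝ (affEmb d '' (P : Set (Eu d)))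
      = P.direction.map (iso d).toLinearMap ⊔ (ℝ ∙ affEmb d c) := by
  apply le_antisymm
  · rw [Submodule.span_le]
    rintro _ ⟨p, hp, rfl⟩
    have hdir : p - c ∈ P.direction := AffineSubspace.vsub_mem_direction hp hc
    have : affEmb d p = iso d (p - c) + affEmb d c := by
      rw [affEmb_eq, affEmb_eq, map_sub]; abel
    rw [this]
    exact Submodule.add_mem _
      (Submodule.mem_sup_left (Submodule.mem_map_of_mem hdir))
      (Submodule.mem_sup_right (Submodule.mem_span_singleton_self _))
  · refine sup_le ?_ ?_
    · rintro _ ⟨v, hv, rfl⟩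
      rcases (AffineSubspace.mem_direction_iff_eq_vsub ⟨c, hc⟩ v).1 hv with ⟨p, hp, q, hq, rfl⟩
      have : (iso d).toLinearMap (p -ᵥ q) = affEmb d p - affEmb d q := by
        show iso d (p - q) = _
        rw [affEmb_eq, affEmb_eq, map_sub]; abel
      rw [this]
      exact Submodule.sub_mem _
        (Submodule.subset_span ⟨p, hp, rfl⟩) (Submodule.subset_span ⟨q, hq, rfl⟩)
    · rw [Submodule.span_le, Set.singleton_subset_iff]
      exact Submodule.subset_span ⟨c, hc, rfl⟩

/-- Master identity. -/
lemma master (hc : c ∈ P) (hortho : ∀ v ∈ P.direction, ⟪c, v⟫ = 0) :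
    projOnto (Submodule.span ℝ (affEmb d '' (P : Set (Eu d))))
      = projOnto (P.direction.map (iso d).toLinearMap) + outerAff d c := by
  rw [span_affEmb_eq hc hortho, projOnto_sup (ortho_dir_line hortho),
    projOnto_span_affEmb]

lemma projOnto_eL_of_orthoLine (hortho : ∀ v ∈ P.direction, ⟪c, v⟫ = 0) :
    projOnto (P.direction.map (iso d).toLinearMap) (eL d) = 0 := by
  refine projOnto_eq_of (Submodule.zero_mem _) ?_
  rintro _ ⟨v, hv, rfl⟩
  show ⟪eL d - 0, iso d v⟫ = 0
  rw [sub_zero, real_inner_comm]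
  exact inner_iso_eL v

/-- Extraction: value of the big projection at `eL`. -/
lemma extract_eL (hc : c ∈ P) (hortho : ∀ v ∈ P.direction, ⟪c, v⟫ = 0) :
    projOnto (Submodule.span ℝ (affEmb d '' (P : Set (Eu d)))) (eL d)
      = (‖c‖ ^ 2 + 1)⁻¹ • affEmb d c := by
  rw [master hc hortho, ContinuousLinearMap.add_apply, projOnto_eL_of_orthoLine hortho,
    zero_add, outerAff_apply]
  have : ⟪affEmb d c, eL d⟫ = 1 := by rw [inner_eL_right, affEmb_last]
  rw [this, one_smul]

lemma extract_eL_last (hc : c ∈ P) (hortho : ∀ v ∈ P.direction, ⟪c, v⟫ = 0) :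
    projOnto (Submodule.span ℝ (affEmb d '' (P : Set (Eu d)))) (eL d) (Fin.last d)
      = (‖c‖ ^ 2 + 1)⁻¹ := by
  rw [extract_eL hc hortho]
  show (‖c‖ ^ 2 + 1)⁻¹ * affEmb d c (Fin.last d) = _
  rw [affEmb_last, mul_one]

lemma norm_sq_add_one_pos (c : Eu d) : (0:ℝ) < ‖c‖ ^ 2 + 1 := by positivity

/-- The "recover the base point" map. -/
def rho1 (d : ℕ) (Q : Eu (d+1) →L[ℝ] Eu (d+1)) : Eu d :=
  (Q (eL d) (Fin.last d))⁻¹ • trunc d (Q (eL d))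

lemma extract_rho1 (hc : c ∈ P) (hortho : ∀ v ∈ P.direction, ⟪c, v⟫ = 0) :
    rho1 d (projOnto (Submodule.span ℝ (affEmb d '' (P : Set (Eu d))))) = c := by
  unfold rho1
  rw [extract_eL_last hc hortho, extract_eL hc hortho, inv_inv, map_smul, trunc_affEmb,
    smul_smul, mul_inv_cancel₀ (norm_sq_add_one_pos c).ne', one_smul]

end Key
end

noncomputable section CLM
variable {d : ℕ}

def isoCLM (d : ℕ) : Eu d →L[ℝ] Eu (d+1) := (iso d).toContinuousLinearMap

def truncCLM (d : ℕ) : Eu (d+1) →L[ℝ] Eu d := LinearMap.toContinuousLinearMap (trunc d)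

@[simp] lemma isoCLM_apply (x : Eu d) : isoCLM d x = iso d x := rfl
@[simp] lemma truncCLM_apply (x : Eu (d+1)) : truncCLM d x = trunc d x := rfl

lemma projOnto_map_iso_comp (W : Submodule ℝ (Eu d)) :
    projOnto (W.map (iso d).toLinearMap)
      = (isoCLM d).comp ((projOnto W).comp (truncCLM d)) := by
  refine ContinuousLinearMap.ext fun y => ?_
  exact projOnto_map_iso W y

lemma trunc_comp_projMap_comp_iso (W : Submodule ℝ (Eu d)) :
    (truncCLM d).comp ((projOnto (W.map (iso d).toLinearMap)).comp (isoCLM d))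
      = projOnto W := by
  refine ContinuousLinearMap.ext fun x => ?_
  show trunc d (projOnto (W.map (iso d).toLinearMap) (iso d x)) = projOnto W x
  rw [projOnto_map_iso, trunc_iso, trunc_iso]

/-- recover the projection onto the direction. -/
def rho2 (d : ℕ) (Q : Eu (d+1) →L[ℝ] Eu (d+1)) : Eu d →L[ℝ] Eu d :=
  (truncCLM d).comp ((Q - outerAff d (rho1 d Q)).comp (isoCLM d))

lemma extract_rho2 {P : AffineSubspace ℝ (Eu d)} {c : Eu d} (hc : c ∈ P)
    (hortho : ∀ v ∈ P.direction, ⟪c, v⟫ = 0) :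
    rho2 d (projOnto (Submodule.span ℝ (affEmb d '' (P : Set (Eu d)))))
      = projOnto P.direction := by
  unfold rho2
  rw [extract_rho1 hc hortho]
  have : projOnto (Submodule.span ℝ (affEmb d '' (P : Set (Eu d)))) - outerAff d c
      = projOnto (P.direction.map (iso d).toLinearMap) := by
    rw [master hc hortho]; abel
  rw [this, trunc_comp_projMap_comp_iso]

lemma exists_pt {P : AffineSubspace ℝ (Eu d)} (hne : (P : Set (Eu d)).Nonempty) :
    ∃ c, c ∈ P ∧ ∀ v ∈ P.direction, ⟪c, v⟫ = 0 := by
  obtain ⟨p, hp⟩ := hne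
  refine ⟨p - projOnto P.direction p, ?_, ?_⟩
  · have := AffineSubspace.vadd_mem_of_mem_direction
      (Submodule.neg_mem _ (projOnto_mem P.direction p)) hp
    simpa [sub_eq_neg_add] using this
  · exact projOnto_inner_zero P.direction p

/-- continuity lemmas -/
lemma continuous_affEmb : Continuous (affEmb d) := by
  have : affEmb d = fun x => iso d x + eL d := funext affEmb_eq
  rw [this]
  exact ((iso d).continuous).add continuous_const

lemma continuous_outerAff : Continuous (outerAff d) := by
  have h1 : Continuous fun c : Eu d => (‖c‖ ^ 2 + 1)⁻¹ :=
    ((continuous_norm.pow 2).add continuous_const).inv₀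
      (fun c => (norm_sq_add_one_pos c).ne')
  have h2 : Continuous fun c : Eu d => (innerSL ℝ (affEmb d c)).smulRight (affEmb d c) := by
    have : Continuous fun c : Eu d =>
        (ContinuousLinearMap.smulRightL ℝ (Eu (d+1)) (Eu (d+1))) (innerSL ℝ (affEmb d c)) :=
      (ContinuousLinearMap.smulRightL ℝ (Eu (d+1)) (Eu (d+1))).continuous.comp
        ((innerSL ℝ).continuous.comp continuous_affEmb)
    exact this.clm_apply continuous_affEmb
  exact h1.smul h2

def Sdom (d : ℕ) : Set (Eu (d+1) →L[ℝ] Eu (d+1)) :=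
  {Q | Q (eL d) (Fin.last d) ≠ 0}

lemma continuous_apply_eL : Continuous fun Q : Eu (d+1) →L[ℝ] Eu (d+1) => Q (eL d) :=
  continuous_id.clm_apply continuous_const

lemma continuous_eval_last : Continuous fun x : Eu (d+1) => x (Fin.last d) :=
  (EuclideanSpace.proj (Fin.last d) : Eu (d+1) →L[ℝ] ℝ).continuous

lemma continuousOn_rho1 : ContinuousOn (rho1 d) (Sdom d) := by
  have h1 : ContinuousOn (fun Q : Eu (d+1) →L[ℝ] Eu (d+1) =>
      (Q (eL d) (Fin.last d))⁻¹) (Sdom d) :=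
    ContinuousOn.inv₀ ((continuous_eval_last.comp continuous_apply_eL).continuousOn)
      (fun Q hQ => hQ)
  exact h1.smul (((truncCLM d).continuous.comp continuous_apply_eL).continuousOn)

lemma continuousOn_rho2 : ContinuousOn (rho2 d) (Sdom d) := by
  unfold rho2
  refine ContinuousOn.clm_comp continuous_const.continuousOn ?_
  refine ContinuousOn.clm_comp ?_ continuous_const.continuousOn
  exact (continuousOn_id.sub ((continuous_outerAff.comp_continuousOn continuousOn_rho1)))

end CLM

noncomputable section Flats
variable {n d : ℕ}

def bigQ (P : AffineFlat n d) : Eu (d+1) →L[ℝ] Eu (d+1) :=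
  projOnto (Submodule.span ℝ (affEmb d '' (P.1 : Set (Eu d))))

lemma continuous_bigQ : Continuous (bigQ : AffineFlat n d → _) := continuous_induced_dom

def cpt (P : AffineFlat n d) : Eu d := (exists_pt P.2.1).choose

lemma cpt_mem (P : AffineFlat n d) : cpt P ∈ P.1 := (exists_pt P.2.1).choose_spec.1

lemma cpt_ortho (P : AffineFlat n d) : ∀ v ∈ P.1.direction, ⟪cpt P, v⟫ = 0 :=
  (exists_pt P.2.1).choose_spec.2

lemma rho1_bigQ (P : AffineFlat n d) : rho1 d (bigQ P) = cpt P :=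
  extract_rho1 (cpt_mem P) (cpt_ortho P)

lemma rho2_bigQ (P : AffineFlat n d) : rho2 d (bigQ P) = projOnto P.1.direction :=
  extract_rho2 (cpt_mem P) (cpt_ortho P)

lemma bigQ_sub_outerAff (P : AffineFlat n d) :
    bigQ P - outerAff d (cpt P) = projOnto (P.1.direction.map (iso d).toLinearMap) := by
  rw [show bigQ P = _ from master (cpt_mem P) (cpt_ortho P)]; abel

lemma bigQ_mem_Sdom (P : AffineFlat n d) : bigQ P ∈ Sdom d := by
  show bigQ P (eL d) (Fin.last d) ≠ 0
  rw [show bigQ P (eL d) (Fin.last d) = _ from extract_eL_last (cpt_mem P) (cpt_ortho P)]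
  exact (inv_pos.2 (norm_sq_add_one_pos _)).ne'

/-- The direction map into the Grassmannian. -/
def dirG (P : AffineFlat n d) : Grassmannian n d := ⟨P.1.direction, P.2.2⟩

/-- The `mk'` flat as an element of `AffineFlat`. -/
def gflatF (a : Eu d) (W : Grassmannian n d) : AffineFlat n d :=
  ⟨AffineSubspace.mk' a W.1, ⟨a, AffineSubspace.self_mem_mk' a W.1⟩, by
    rw [AffineSubspace.direction_mk']; exact W.2⟩

lemma master_mk' (a : Eu d) (W : Submodule ℝ (Eu d)) :
    projOnto (Submodule.span ℝ (affEmb d '' ((AffineSubspace.mk' a W : AffineSubspace ℝ (Eu d)) : Set (Eu d))))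
      = (isoCLM d).comp ((projOnto W).comp (truncCLM d)) + outerAff d (a - projOnto W a) := by
  have hc : a - projOnto W a ∈ AffineSubspace.mk' a W := by
    rw [AffineSubspace.mem_mk']
    show a - projOnto W a - a ∈ W
    have : a - projOnto W a - a = -(projOnto W a) := by abel
    rw [this]
    exact Submodule.neg_mem _ (projOnto_mem W a)
  have hortho : ∀ v ∈ (AffineSubspace.mk' a W).direction, ⟪a - projOnto W a, v⟫ = 0 := by
    rw [AffineSubspace.direction_mk']
    exact projOnto_inner_zero W a
  rw [master hc hortho, AffineSubspace.direction_mk', projOnto_map_iso_comp]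

/-- translation affine map -/
def tmap (d : ℕ) (w : Eu d) : Eu d →ᵃ[ℝ] Eu d :=
  (AffineEquiv.constVAdd ℝ (Eu d) w).toAffineMap

lemma mem_tmap {w x : Eu d} {P : AffineSubspace ℝ (Eu d)} :
    x ∈ P.map (tmap d w) ↔ ∃ y ∈ P, w + y = x := by
  rw [AffineSubspace.mem_map]
  simp only [tmap, AffineEquiv.coe_toAffineMap, AffineEquiv.constVAdd_apply]
  rfl

lemma direction_tmap (w : Eu d) (P : AffineSubspace ℝ (Eu d)) :
    (P.map (tmap d w)).direction = P.direction := by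
  rw [AffineSubspace.map_direction]
  have : (tmap d w).linear = LinearMap.id := rfl
  rw [this, Submodule.map_id]

lemma tmap_zero (P : AffineSubspace ℝ (Eu d)) : P.map (tmap d 0) = P := by
  ext x
  rw [mem_tmap]
  constructor
  · rintro ⟨y, hy, rfl⟩; rwa [zero_add]
  · intro hx; exact ⟨x, hx, zero_add x⟩

/-- The translated flat. -/
def trF (a : Eu d) (t : ℝ) (P : AffineFlat n d) : AffineFlat n d :=
  ⟨P.1.map (tmap d (t • (a - (cpt P + projOnto P.1.direction a)))),
    ⟨_, AffineSubspace.mem_map_of_mem _ (cpt_mem P)⟩,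
    by rw [direction_tmap]; exact P.2.2⟩

/-- formula for the homotopy at operator level. -/
def Gm (d : ℕ) (a : Eu d) (p : ℝ × (Eu (d+1) →L[ℝ] Eu (d+1))) : Eu (d+1) →L[ℝ] Eu (d+1) :=
  (p.2 - outerAff d (rho1 d p.2))
    + outerAff d ((1 - p.1) • rho1 d p.2 + p.1 • (a - rho2 d p.2 a))

lemma continuousOn_Gm (a : Eu d) :
    ContinuousOn (Gm d a) (Set.univ ×ˢ Sdom d) := by
  have h2 : ContinuousOn (fun p : ℝ × (Eu (d+1) →L[ℝ] Eu (d+1)) => p.2) (Set.univ ×ˢ Sdom d) :=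
    continuous_snd.continuousOn
  have hr1 : ContinuousOn (fun p : ℝ × (Eu (d+1) →L[ℝ] Eu (d+1)) => rho1 d p.2)
      (Set.univ ×ˢ Sdom d) :=
    continuousOn_rho1.comp h2 (fun p hp => hp.2)
  have hr2 : ContinuousOn (fun p : ℝ × (Eu (d+1) →L[ℝ] Eu (d+1)) => rho2 d p.2)
      (Set.univ ×ˢ Sdom d) :=
    continuousOn_rho2.comp h2 (fun p hp => hp.2)
  refine ContinuousOn.add (h2.sub (continuous_outerAff.comp_continuousOn hr1)) ?_
  refine continuous_outerAff.comp_continuousOn (ContinuousOn.add ?_ ?_)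
  · exact ((continuous_const.sub continuous_fst).continuousOn).smul hr1
  · exact (continuous_fst.continuousOn).smul
      (continuous_const.continuousOn.sub (hr2.clm_apply continuous_const.continuousOn))

lemma bigQ_trF (a : Eu d) (t : ℝ) (P : AffineFlat n d) :
    bigQ (trF a t P) = Gm d a (t, bigQ P) := by
  set c := cpt P with hc
  set D := projOnto P.1.direction with hD
  set w := t • (a - (c + D a)) with hw
  have hct_mem : (1 - t) • c + t • (a - D a) ∈ (trF a t P).1 := by
    refine mem_tmap.2 ⟨c, cpt_mem P, ?_⟩
    module
  have hct_ortho : ∀ v ∈ (trF a t P).1.direction, ⟪(1 - t) • c + t • (a - D a), v⟫ = 0 := by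
    show ∀ v ∈ (P.1.map (tmap d w)).direction, _
    rw [direction_tmap]
    intro v hv
    rw [inner_add_left, real_inner_smul_left, real_inner_smul_left,
      cpt_ortho P v hv, projOnto_inner_zero P.1.direction a v hv]
    ring
  have hmaster := master hct_mem hct_ortho
  have hdir : (trF a t P).1.direction = P.1.direction := direction_tmap _ _
  rw [show bigQ (trF a t P) = _ from hmaster, hdir]
  rw [Gm, rho1_bigQ, rho2_bigQ, ← hc, ← hD, ← bigQ_sub_outerAff]

lemma trF_zero (a : Eu d) (P : AffineFlat n d) : trF a 0 P = P := by
  apply Subtype.ext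
  show P.1.map (tmap d ((0:ℝ) • _)) = P.1
  rw [zero_smul, tmap_zero]

lemma trF_one (a : Eu d) (P : AffineFlat n d) :
    (trF a 1 P).1 = AffineSubspace.mk' a P.1.direction := by
  refine AffineSubspace.ext_of_direction_eq ?_ ⟨a, ?_, AffineSubspace.self_mem_mk' a _⟩
  · rw [show (trF a 1 P).1.direction = P.1.direction from direction_tmap _ _,
      AffineSubspace.direction_mk']
  · refine mem_tmap.2 ⟨cpt P + projOnto P.1.direction a, ?_, ?_⟩
    · have := AffineSubspace.vadd_mem_of_mem_direction
        (projOnto_mem P.1.direction a) (cpt_mem P)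
      show cpt P + projOnto P.1.direction a ∈ P.1
      have hcomm : cpt P + projOnto P.1.direction a = projOnto P.1.direction a +ᵥ cpt P :=
        add_comm _ _
      rwa [hcomm]
    · module

lemma trF_transversal {A : Set (Eu d)} (hconv : Convex ℝ A) {a : Eu d} (ha : a ∈ A)
    {t : ℝ} (ht0 : 0 ≤ t) (ht1 : t ≤ 1) (P : AffineFlat n d)
    (hP : ((P.1 : Set (Eu d)) ∩ A).Nonempty) :
    (((trF a t P).1 : Set (Eu d)) ∩ A).Nonempty := by
  obtain ⟨p, hpP, hpA⟩ := hP
  set c := cpt P with hc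
  set D := projOnto P.1.direction with hD
  set q := c + D a with hq
  have hqP : q ∈ P.1 := by
    have := AffineSubspace.vadd_mem_of_mem_direction (projOnto_mem P.1.direction a) (cpt_mem P)
    have hcomm : q = projOnto P.1.direction a +ᵥ cpt P := add_comm _ _
    rwa [hcomm]
  have hy : p + t • (q - p) ∈ P.1 := by
    have h1 : q - p ∈ P.1.direction := AffineSubspace.vsub_mem_direction hqP hpP
    have h2 : t • (q - p) ∈ P.1.direction := Submodule.smul_mem _ t h1
    have := AffineSubspace.vadd_mem_of_mem_direction h2 hpP
    have hcomm : p + t • (q - p) = t • (q - p) +ᵥ p := add_comm _ _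
    rwa [hcomm]
  refine ⟨t • (a - (c + D a)) + (p + t • (q - p)), mem_tmap.2 ⟨_, hy, rfl⟩, ?_⟩
  have heq : t • (a - (c + D a)) + (p + t • (q - p)) = (1 - t) • p + t • a := by
    rw [hq]; module
  rw [heq]
  exact hconv hpA ha (by linarith) ht0 (by ring)

end Flats


/-- Lemma 3.1.1: for a nonempty convex set `A ⊆ ℝ^d` and `1 ≤ n < d`, the space of
affine `n`-flats meeting `A` is homotopy equivalent to the Grassmannian `G(n, d)`. -/
theorem lemma_3_1_1 (d n : ℕ) (hn : 1 ≤ n) (hnd : n < d)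
    (A : Set (EuclideanSpace ℝ (Fin d))) (hA : A.Nonempty) (hconv : Convex ℝ A) :
    Nonempty (ContinuousMap.HomotopyEquiv
      ↥(Transversals n (fun _ : Unit => A) Set.univ) (Grassmannian n d)) := by
  classical
  obtain ⟨a, ha⟩ := hA
  -- continuity of the "direction" map
  have pW : Continuous fun W : Grassmannian n d => projOnto W.1 := continuous_induced_dom
  have contf : Continuous fun P : ↥(Transversals n (fun _ : Unit => A) Set.univ) =>
      dirG P.1 := by
    have heq : ((fun W : Grassmannian n d => projOnto W.1) ∘
        fun P : ↥(Transversals n (fun _ : Unit => A) Set.univ) =>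
          dirG P.1)
        = fun P => rho2 d (bigQ P.1) := funext fun P => (rho2_bigQ P.1).symm
    have hc2 : Continuous ((fun W : Grassmannian n d => projOnto W.1) ∘
        fun P : ↥(Transversals n (fun _ : Unit => A) Set.univ) =>
          dirG P.1) := by
      rw [heq]
      exact ContinuousOn.comp_continuous (g := rho2 d) (s := Sdom d)
        continuousOn_rho2
        (continuous_bigQ.comp continuous_subtype_val) (fun P => bigQ_mem_Sdom P.1)
    exact continuous_induced_rng.2 hc2
  have contg0 : Continuous fun W : Grassmannian n d => gflatF (n := n) a W := by
    have heq : ((fun P : AffineFlat n d =>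
        projOnto (Submodule.span ℝ (affEmb d '' (P.1 : Set (EuclideanSpace ℝ (Fin d)))))) ∘
        fun W : Grassmannian n d => gflatF (n := n) a W)
        = fun W : Grassmannian n d =>
          (isoCLM d).comp ((projOnto W.1).comp (truncCLM d))
            + outerAff d (a - projOnto W.1 a) := funext fun W => master_mk' a W.1
    have hc2 : Continuous ((fun P : AffineFlat n d =>
        projOnto (Submodule.span ℝ (affEmb d '' (P.1 : Set (EuclideanSpace ℝ (Fin d)))))) ∘
        fun W : Grassmannian n d => gflatF (n := n) a W) := by
      rw [heq]
      exact (Continuous.clm_comp continuous_const (pW.clm_comp continuous_const)).add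
        (continuous_outerAff.comp (continuous_const.sub (pW.clm_apply continuous_const)))
    exact continuous_induced_rng.2 hc2
  let F : C(↥(Transversals n (fun _ : Unit => A) Set.univ), Grassmannian n d) :=
    ContinuousMap.mk (fun P => dirG P.1) contf
  let G : C(Grassmannian n d, ↥(Transversals n (fun _ : Unit => A) Set.univ)) :=
    ContinuousMap.mk
      (fun W => ⟨gflatF a W, fun _ _ => ⟨a, AffineSubspace.self_mem_mk' a W.1, ha⟩⟩)
      (contg0.subtype_mk _)
  -- the homotopy
  have contH : Continuous fun p :
      unitInterval × ↥(Transversals n (fun _ : Unit => A) Set.univ) =>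
      trF a (1 - (p.1 : ℝ)) p.2.1 := by
    have heq : ((fun P : AffineFlat n d =>
        projOnto (Submodule.span ℝ (affEmb d '' (P.1 : Set (EuclideanSpace ℝ (Fin d)))))) ∘
        fun p : unitInterval × ↥(Transversals n (fun _ : Unit => A) Set.univ) =>
          trF a (1 - (p.1 : ℝ)) p.2.1)
        = fun p : unitInterval × ↥(Transversals n (fun _ : Unit => A) Set.univ) =>
          Gm d a ((1 - (p.1 : ℝ)), bigQ p.2.1) := funext fun p => bigQ_trF a _ p.2.1
    have hpair : Continuous fun p :
        unitInterval × ↥(Transversals n (fun _ : Unit => A) Set.univ) =>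
        (((1 - (p.1 : ℝ)), bigQ p.2.1) : ℝ × (Eu (d+1) →L[ℝ] Eu (d+1))) :=
      (continuous_const.sub (continuous_subtype_val.comp continuous_fst)).prodMk
        (continuous_bigQ.comp (continuous_subtype_val.comp continuous_snd))
    have hc2 : Continuous ((fun P : AffineFlat n d =>
        projOnto (Submodule.span ℝ (affEmb d '' (P.1 : Set (EuclideanSpace ℝ (Fin d)))))) ∘
        fun p : unitInterval × ↥(Transversals n (fun _ : Unit => A) Set.univ) =>
          trF a (1 - (p.1 : ℝ)) p.2.1) := by
      rw [heq]
      exact ContinuousOn.comp_continuous (continuousOn_Gm a) hpair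
        (fun p => ⟨Set.mem_univ _, bigQ_mem_Sdom p.2.1⟩)
    exact continuous_induced_rng.2 hc2
  let H : ContinuousMap.Homotopy (G.comp F)
      (ContinuousMap.id ↥(Transversals n (fun _ : Unit => A) Set.univ)) :=
    { toFun := fun p => ⟨trF a (1 - (p.1 : ℝ)) p.2.1,
        fun _ _ => trF_transversal hconv ha
          (by have := p.1.2.2; linarith) (by have := p.1.2.1; linarith)
          p.2.1 (p.2.2 () (Set.mem_univ ()))⟩
      continuous_toFun := contH.subtype_mk _
      map_zero_left := fun x => by
        refine Subtype.ext ?_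
        show trF a (1 - ((0 : unitInterval) : ℝ)) x.1 = gflatF a (dirG x.1)
        refine Subtype.ext ?_
        rw [show (1 - ((0 : unitInterval) : ℝ)) = 1 by norm_num]
        exact trF_one a x.1
      map_one_left := fun x => by
        refine Subtype.ext ?_
        show trF a (1 - ((1 : unitInterval) : ℝ)) x.1 = x.1
        rw [show (1 - ((1 : unitInterval) : ℝ)) = 0 by norm_num]
        exact trF_zero a x.1 }
  refine ⟨⟨F, G, ⟨H⟩, ?_⟩⟩
  have : F.comp G = ContinuousMap.id (Grassmannian n d) := by
    refine ContinuousMap.ext fun W => Subtype.ext ?_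
    exact AffineSubspace.direction_mk' a W.1
  rw [this]
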